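/- Given the shift data of a fully polarized LG-algebra, the relation ≤π on the disjoint union P ⊕ N, defined by: for p, q ∈ P, p ≤π q iff p ⪌ ↑q; for p ∈ P and n ∈ N, p ≤π n iff p ⪯ n; for m, n ∈ N, m ≤π n iff ↓m ⪷ n; and no element of N is ≤π-below an element of P, is a preorder: it is reflexive and transitive. -/

import Mathlib

/-- A weakening relation from an ordered set `(α, leA)` to an ordered set `(β, leB)`. -/
def IsWeakeningBetween {α β : Type*} (leA : α → α → Prop) (leB : β → β → Prop)
    (R : α → β → Prop) : Prop :=
  ∀ ⦃a' a b b'⦄, leA a' a → R a b → leB b b' → R a' b'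

/-- The shift data of a fully polarized LG-algebra: four posets `P`, `Ṗ` (`Pd`),
`N`, `Ṅ` (`Nd`), adjoint pairs of monotone shift maps `↑ ⊣ ⫞` and `↿ ⊣ ↓`, and
three weakening relations `⪌ʳ` (`gtr : P → Ṗ`), `⪯` (`prec : P → N`) and
`⪅ᵇ` (`lesb : Ṅ → N`) with `↑p ⪅ᵇ n ↔ p ⪯ n ↔ p ⪌ʳ ↓n`. -/
structure ShiftData (P Pd N Nd : Type*) [PartialOrder P] [PartialOrder Pd]
    [PartialOrder N] [PartialOrder Nd] where
  /-- `↑ : P → Ṅ` -/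
  up : P → Nd
  /-- `⫞ : Ṅ → P` -/
  corner : Nd → P
  /-- `↿ : Ṗ → N` -/
  upl : Pd → N
  /-- `↓ : N → Ṗ` -/
  down : N → Pd
  up_mono : Monotone up
  corner_mono : Monotone corner
  upl_mono : Monotone upl
  down_mono : Monotone down
  /-- the adjunction `↑ ⊣ ⫞` -/
  up_adj : ∀ (p : P) (nd : Nd), up p ≤ nd ↔ p ≤ corner nd
  /-- the adjunction `↿ ⊣ ↓` -/
  upl_adj : ∀ (pd : Pd) (n : N), upl pd ≤ n ↔ pd ≤ down n
  /-- `⪌ʳ : P → Ṗ` -/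
  gtr : P → Pd → Prop
  /-- `⪯ : P → N` -/
  prec : P → N → Prop
  /-- `⪅ᵇ : Ṅ → N` -/
  lesb : Nd → N → Prop
  gtr_wk : IsWeakeningBetween (· ≤ ·) (· ≤ ·) gtr
  prec_wk : IsWeakeningBetween (· ≤ ·) (· ≤ ·) prec
  lesb_wk : IsWeakeningBetween (· ≤ ·) (· ≤ ·) lesb
  /-- `↑p ⪅ᵇ n ↔ p ⪯ n` -/
  lesb_up_iff_prec : ∀ (p : P) (n : N), lesb (up p) n ↔ prec p n
  /-- `p ⪯ n ↔ p ⪌ʳ ↓n` -/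
  prec_iff_gtr_down : ∀ (p : P) (n : N), prec p n ↔ gtr p (down n)

variable {P Pd N Nd : Type*} [PartialOrder P] [PartialOrder Pd]
  [PartialOrder N] [PartialOrder Nd]

/-- The represented relation `⪌ : P → Ṅ`, `p ⪌ ṅ ↔ ↑p ⩿_Ṅ ṅ`. -/
def ShiftData.gles (S : ShiftData P Pd N Nd) (p : P) (nd : Nd) : Prop := S.up p ≤ nd

/-- The represented relation `⪷ : Ṗ → N`, `ṗ ⪷ n ↔ ṗ ⩿_Ṗ ↓n`. -/
def ShiftData.pres (S : ShiftData P Pd N Nd) (pd : Pd) (n : N) : Prop := pd ≤ S.down n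

/-- The relation `≤π` on `P ⊕ N`: `p ≤π q ↔ p ⪌ ↑q`, `p ≤π n ↔ p ⪯ n`,
`m ≤π n ↔ ↓m ⪷ n`, and no element of `N` is below an element of `P`. -/
def ShiftData.lepi (S : ShiftData P Pd N Nd) : P ⊕ N → P ⊕ N → Prop
  | Sum.inl p, Sum.inl q => S.gles p (S.up q)
  | Sum.inl p, Sum.inr n => S.prec p n
  | Sum.inr m, Sum.inr n => S.pres (S.down m) n
  | Sum.inr _, Sum.inl _ => False

/-! On `P` and on `N` the relation `≤π` is the preimage of the order of `Ṅ` under `↑`, resp. of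
`Ṗ` under `↓`. The two mixed composites reduce to `⪯`: precomposing with `↑p ⩿ ↑q` weakens
`↑q ⪅ᵇ n`, and postcomposing with `↓m ⩿ ↓n` weakens `p ⪌ʳ ↓m`. -/

namespace ShiftData

variable (S : ShiftData P Pd N Nd)

theorem prec_of_up_le_up {p q : P} {n : N} (hpq : S.up p ≤ S.up q) (hqn : S.prec q n) :
    S.prec p n :=
  (S.lesb_up_iff_prec p n).mp (S.lesb_wk hpq ((S.lesb_up_iff_prec q n).mpr hqn) le_rfl)

theorem prec_of_down_le_down {p : P} {m n : N} (hpm : S.prec p m) (hmn : S.down m ≤ S.down n) :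
    S.prec p n :=
  (S.prec_iff_gtr_down p n).mpr (S.gtr_wk le_rfl ((S.prec_iff_gtr_down p m).mp hpm) hmn)

theorem lepi_refl : Reflexive S.lepi
  | .inl p => le_refl (S.up p)
  | .inr n => le_refl (S.down n)

theorem lepi_trans : Transitive S.lepi
  | .inl _, .inl _, .inl _, hpq, hqr => le_trans (α := Nd) hpq hqr
  | .inl _, .inl _, .inr _, hpq, hqn => S.prec_of_up_le_up hpq hqn
  | .inl _, .inr _, .inr _, hpm, hmn => S.prec_of_down_le_down hpm hmn
  | .inr _, .inr _, .inr _, hlm, hmn => le_trans (α := Pd) hlm hmn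

end ShiftData

/-- The relation `≤π` on `P ⊕ N` is a preorder: reflexive and transitive. -/
theorem stmt6 (S : ShiftData P Pd N Nd) :
    Reflexive S.lepi ∧ Transitive S.lepi :=
  ⟨S.lepi_refl, S.lepi_trans⟩
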